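/- arXiv:1203.0563 — 3 statements merged into one kernel-verified Lean document; each statement's English description precedes it below -/
import Mathlib

section
/- Let δ > 0 and let ℓ be the x-axis with four consecutive points p1=(0,0), p2=(δ,0), p3=(2δ,0), p4=(3δ,0). Let Q12 be a closed disk whose boundary passes through p1 and p2, and Q34 a closed disk whose boundary passes through p3 and p4, both disks having centers with negative y-coordinate. If both disks lie strictly below the horizontal line y = (1 - √3/2)δ, then the interiors of Q12 and Q34 intersect. -/
/-!
A disk whose boundary cuts the x-axis in a chord of length `δ` and which stays below the line
`y = (1 - √3/2)δ` must be larger than the disk of radius `δ` on the same chord tangent to that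
line: its radius exceeds `δ` and its center height `b` is below `-(√3/2)δ`. For two such disks
with chord midpoints `2δ` apart this gives `r₁ r₂ > δ²` and `b₁ b₂ > 3δ²/4`, hence
`dist c₁ c₂ ^ 2 = 4δ² + (b₁ - b₂)² < (r₁ + r₂)²`, so the open disks meet.
-/

noncomputable def pt (x y : ℝ) : EuclideanSpace ℝ (Fin 2) := WithLp.toLp 2 ![x, y]

open Metric

@[simp]
lemma pt_apply_zero (x y : ℝ) : pt x y 0 = x := rfl

@[simp]
lemma pt_apply_one (x y : ℝ) : pt x y 1 = y := rfl

lemma EuclideanSpace.dist_sq_eq_fin_two (p q : EuclideanSpace ℝ (Fin 2)) :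
    dist p q ^ 2 = (p 0 - q 0) ^ 2 + (p 1 - q 1) ^ 2 := by
  simp [EuclideanSpace.dist_sq_eq, Fin.sum_univ_two, Real.dist_eq, sq_abs]

lemma center_and_radius_of_chord {c : EuclideanSpace ℝ (Fin 2)} {a δ r : ℝ} (hδ : δ ≠ 0)
    (h₁ : dist c (pt a 0) = r) (h₂ : dist c (pt (a + δ) 0) = r) :
    c 0 = a + δ / 2 ∧ r ^ 2 = δ ^ 2 / 4 + c 1 ^ 2 := by
  have e₁ := EuclideanSpace.dist_sq_eq_fin_two c (pt a 0)
  have e₂ := EuclideanSpace.dist_sq_eq_fin_two c (pt (a + δ) 0)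
  simp only [h₁, h₂, pt_apply_zero, pt_apply_one, sub_zero] at e₁ e₂
  have hx : c 0 = a + δ / 2 :=
    mul_left_cancel₀ (mul_ne_zero two_ne_zero hδ) (by linear_combination e₂ - e₁)
  refine ⟨hx, ?_⟩
  rw [e₁, hx]
  ring

lemma top_mem_closedBall (c : EuclideanSpace ℝ (Fin 2)) {r : ℝ} (hr : 0 ≤ r) :
    pt (c 0) (c 1 + r) ∈ closedBall c r := by
  rw [mem_closedBall, dist_comm, ← sq_le_sq₀ dist_nonneg hr,
    EuclideanSpace.dist_sq_eq_fin_two]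
  simp

/-- The top `b + √(δ²/4 + b²)` of the disk is increasing in the center height `b` and equals
`(1 - √3/2)δ` at `b = -(√3/2)δ`. -/
lemma center_lt_of_top_lt {δ b r : ℝ} (hδ : 0 < δ) (hr : 0 ≤ r)
    (hrb : r ^ 2 = δ ^ 2 / 4 + b ^ 2) (htop : b + r < (1 - √3 / 2) * δ) :
    b < -(√3 / 2) * δ := by
  have hs : √3 ^ 2 = 3 := Real.sq_sqrt (by norm_num)
  have hs2 : √3 < 2 := by nlinarith [Real.sqrt_nonneg 3]
  by_contra! hb
  have hsq : r ^ 2 < ((1 - √3 / 2) * δ - b) ^ 2 := by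
    gcongr
    linarith
  nlinarith [mul_le_mul_of_nonneg_left hb (mul_pos (sub_pos.2 hs2) hδ).le]

lemma lt_radius_of_center_lt {δ b r : ℝ} (hδ : 0 < δ) (hr : 0 ≤ r)
    (hrb : r ^ 2 = δ ^ 2 / 4 + b ^ 2) (hb : b < -(√3 / 2) * δ) : δ < r := by
  have hs : √3 ^ 2 = 3 := Real.sq_sqrt (by norm_num)
  have hb' : (√3 / 2 * δ) ^ 2 < b ^ 2 := by
    rw [← neg_sq b]
    gcongr
    linarith
  refine lt_of_pow_lt_pow_left₀ 2 hr ?_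
  nlinarith

lemma dist_sq_lt_sq_add_radii {δ b₁ b₂ r₁ r₂ : ℝ} (hδ : 0 < δ) (hr₁ : δ < r₁) (hr₂ : δ < r₂)
    (e₁ : r₁ ^ 2 = δ ^ 2 / 4 + b₁ ^ 2) (e₂ : r₂ ^ 2 = δ ^ 2 / 4 + b₂ ^ 2)
    (hb₁ : b₁ < -(√3 / 2) * δ) (hb₂ : b₂ < -(√3 / 2) * δ) :
    (2 * δ) ^ 2 + (b₁ - b₂) ^ 2 < (r₁ + r₂) ^ 2 := by
  have hs : √3 ^ 2 = 3 := Real.sq_sqrt (by norm_num)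
  have hr : δ * δ < r₁ * r₂ := mul_lt_mul'' hr₁ hr₂ hδ.le hδ.le
  have hb : √3 / 2 * δ * (√3 / 2 * δ) < -b₁ * -b₂ :=
    mul_lt_mul'' (by linarith) (by linarith) (by positivity) (by positivity)
  nlinarith

theorem disks_below_line_overlap_general
    (δ : ℝ) (hδ : 0 < δ)
    (c₁ c₂ : EuclideanSpace ℝ (Fin 2)) (r₁ r₂ : ℝ)
    (hp₁ : dist c₁ (pt 0 0) = r₁)
    (hp₂ : dist c₁ (pt δ 0) = r₁)
    (hp₃ : dist c₂ (pt (2 * δ) 0) = r₂)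
    (hp₄ : dist c₂ (pt (3 * δ) 0) = r₂)
    (hbelow₁ : ∀ q ∈ Metric.closedBall c₁ r₁, q 1 < (1 - Real.sqrt 3 / 2) * δ)
    (hbelow₂ : ∀ q ∈ Metric.closedBall c₂ r₂, q 1 < (1 - Real.sqrt 3 / 2) * δ) :
    (Metric.ball c₁ r₁ ∩ Metric.ball c₂ r₂).Nonempty := by
  have hr₁ : 0 ≤ r₁ := hp₁ ▸ dist_nonneg
  have hr₂ : 0 ≤ r₂ := hp₃ ▸ dist_nonneg
  obtain ⟨hx₁, e₁⟩ := center_and_radius_of_chord hδ.ne' hp₁ (by rwa [zero_add])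
  obtain ⟨hx₂, e₂⟩ :=
    center_and_radius_of_chord hδ.ne' hp₃ (by rwa [show 2 * δ + δ = 3 * δ by ring])
  have hb₁ :=
    center_lt_of_top_lt hδ hr₁ e₁ (by simpa using hbelow₁ _ (top_mem_closedBall c₁ hr₁))
  have hb₂ :=
    center_lt_of_top_lt hδ hr₂ e₂ (by simpa using hbelow₂ _ (top_mem_closedBall c₂ hr₂))
  have hδr₁ := lt_radius_of_center_lt hδ hr₁ e₁ hb₁
  have hδr₂ := lt_radius_of_center_lt hδ hr₂ e₂ hb₂
  have hdist : dist c₁ c₂ < r₁ + r₂ := by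
    refine lt_of_pow_lt_pow_left₀ 2 (by linarith) ?_
    calc dist c₁ c₂ ^ 2 = (2 * δ) ^ 2 + (c₁ 1 - c₂ 1) ^ 2 := by
          rw [EuclideanSpace.dist_sq_eq_fin_two, hx₁, hx₂]
          ring
      _ < (r₁ + r₂) ^ 2 := dist_sq_lt_sq_add_radii hδ hδr₁ hδr₂ e₁ e₂ hb₁ hb₂
  rw [← Set.not_disjoint_iff_nonempty_inter,
    disjoint_ball_ball_iff (by linarith) (by linarith), not_le]
  exact hdist

/-- Two disks, one through `(0,0)` and `(δ,0)`, the other through `(2δ,0)` and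
`(3δ,0)`, with centers below the x-axis, lying strictly below the line
`y = (1 - √3/2)δ`, must overlap in their interiors. -/
theorem disks_below_line_overlap
    (δ : ℝ) (hδ : 0 < δ)
    (c₁ c₂ : EuclideanSpace ℝ (Fin 2)) (r₁ r₂ : ℝ)
    (hr₁ : 0 < r₁) (hr₂ : 0 < r₂)
    (hc₁ : c₁ 1 < 0) (hc₂ : c₂ 1 < 0)
    (hp₁ : dist c₁ (pt 0 0) = r₁)
    (hp₂ : dist c₁ (pt δ 0) = r₁)
    (hp₃ : dist c₂ (pt (2 * δ) 0) = r₂)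
    (hp₄ : dist c₂ (pt (3 * δ) 0) = r₂)
    (hbelow₁ : ∀ q ∈ Metric.closedBall c₁ r₁, q 1 < (1 - Real.sqrt 3 / 2) * δ)
    (hbelow₂ : ∀ q ∈ Metric.closedBall c₂ r₂, q 1 < (1 - Real.sqrt 3 / 2) * δ) :
    (Metric.ball c₁ r₁ ∩ Metric.ball c₂ r₂).Nonempty :=
  disks_below_line_overlap_general δ hδ c₁ c₂ r₁ r₂ hp₁ hp₂ hp₃ hp₄ hbelow₁ hbelow₂
end

section
/- The system z² + y1² = r1², z² + y2² = r2², 16z² + (1+y1)² = (1+r1)², 64z² + (1+y2)² = (1+r2)², 16z² + (y1−y2)² = (r1+r2)², with unknowns z, y1, y2, r1, r2 all positive and z < 2/63, implies z² = (4/945)(7 − 4√3). -/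
/-!
Subtracting `z² + y² = r²` from `a z² + (1 + y)² = (1 + r)²` leaves an equation linear in `r`,
so `r = y + (a - 1) z² / 2`; putting this back and dividing by `z²` expresses `y` through `z²`.
With these values the last equation becomes the quadratic `893025 w² - 52920 w + 16 = 0` in
`w = z²`, whose roots are `(4/945)(7 ± 4√3)`, and `z < 2/63` excludes the larger one.
-/

namespace TangencySystem

variable {z y r a : ℝ}

theorem radius_eq_of_tangent (h₀ : z ^ 2 + y ^ 2 = r ^ 2)
    (h₁ : a * z ^ 2 + (1 + y) ^ 2 = (1 + r) ^ 2) :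
    r = y + (a - 1) / 2 * z ^ 2 := by
  linear_combination (h₀ - h₁) / 2

theorem offset_eq_of_tangent (hz : z ≠ 0) (ha : a ≠ 1) (h₀ : z ^ 2 + y ^ 2 = r ^ 2)
    (h₁ : a * z ^ 2 + (1 + y) ^ 2 = (1 + r) ^ 2) :
    y = (4 - (a - 1) ^ 2 * z ^ 2) / (4 * (a - 1)) := by
  have hz2 : z ^ 2 ≠ 0 := pow_ne_zero 2 hz
  have ha1 : 4 * (a - 1) ≠ 0 := mul_ne_zero four_ne_zero (sub_ne_zero.mpr ha)
  rw [radius_eq_of_tangent h₀ h₁] at h₀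
  have key : z ^ 2 * (y * (4 * (a - 1))) = z ^ 2 * (4 - (a - 1) ^ 2 * z ^ 2) := by
    linear_combination (-4) * h₀
  rw [eq_div_iff ha1]
  exact mul_left_cancel₀ hz2 key

theorem eq_or_eq_of_quadratic {w : ℝ} (h : 893025 * w ^ 2 - 52920 * w + 16 = 0) :
    w = 4 / 945 * (7 - 4 * √3) ∨ w = 4 / 945 * (7 + 4 * √3) := by
  have hs : √3 ^ 2 = 3 := Real.sq_sqrt (by norm_num)
  have hfac : (w - 4 / 945 * (7 - 4 * √3)) * (w - 4 / 945 * (7 + 4 * √3)) = 0 := by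
    linear_combination h / 893025 - 256 / 893025 * hs
  rcases mul_eq_zero.1 hfac with h' | h'
  · exact Or.inl (sub_eq_zero.1 h')
  · exact Or.inr (sub_eq_zero.1 h')

end TangencySystem

open TangencySystem in
theorem tangency_system_general (z y₁ y₂ r₁ r₂ : ℝ)
    (hz : 0 < z)
    (hz' : z < 2 / 63)
    (e₁ : z ^ 2 + y₁ ^ 2 = r₁ ^ 2)
    (e₂ : z ^ 2 + y₂ ^ 2 = r₂ ^ 2)
    (e₃ : 16 * z ^ 2 + (1 + y₁) ^ 2 = (1 + r₁) ^ 2)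
    (e₄ : 64 * z ^ 2 + (1 + y₂) ^ 2 = (1 + r₂) ^ 2)
    (e₅ : 16 * z ^ 2 + (y₁ - y₂) ^ 2 = (r₁ + r₂) ^ 2) :
    z ^ 2 = (4 / 945) * (7 - 4 * Real.sqrt 3) := by
  rw [radius_eq_of_tangent e₁ e₃, radius_eq_of_tangent e₂ e₄,
    offset_eq_of_tangent hz.ne' (by norm_num) e₁ e₃,
    offset_eq_of_tangent hz.ne' (by norm_num) e₂ e₄] at e₅
  have hq : 893025 * (z ^ 2) ^ 2 - 52920 * z ^ 2 + 16 = 0 := by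
    linear_combination -3780 * e₅
  refine (eq_or_eq_of_quadratic hq).resolve_right fun h => ?_
  have hsmall : z ^ 2 < (2 / 63) ^ 2 := pow_lt_pow_left₀ hz' hz.le two_ne_zero
  have hlarge : (2 / 63 : ℝ) ^ 2 < 4 / 945 * (7 + 4 * √3) := by
    nlinarith [Real.sqrt_nonneg 3]
  linarith

/-- The tangency system of Lemma 4: positive reals `z, y₁, y₂, r₁, r₂` with
`z < 2/63` satisfying the five equations force `z² = (4/945)(7 − 4√3)`. -/
theorem tangency_system (z y₁ y₂ r₁ r₂ : ℝ)
    (hz : 0 < z) (hy₁ : 0 < y₁) (hy₂ : 0 < y₂) (hr₁ : 0 < r₁) (hr₂ : 0 < r₂)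
    (hz' : z < 2 / 63)
    (e₁ : z ^ 2 + y₁ ^ 2 = r₁ ^ 2)
    (e₂ : z ^ 2 + y₂ ^ 2 = r₂ ^ 2)
    (e₃ : 16 * z ^ 2 + (1 + y₁) ^ 2 = (1 + r₁) ^ 2)
    (e₄ : 64 * z ^ 2 + (1 + y₂) ^ 2 = (1 + r₂) ^ 2)
    (e₅ : 16 * z ^ 2 + (y₁ - y₂) ^ 2 = (r₁ + r₂) ^ 2) :
    z ^ 2 = (4 / 945) * (7 - 4 * Real.sqrt 3) :=
  tangency_system_general z y₁ y₂ r₁ r₂ hz hz' e₁ e₂ e₃ e₄ e₅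
end

section
/- Let θ = π/339 and k = 340. Suppose positive reals d1, r1 satisfy r1² = d1² − 2 d1 cos θ + 1 and d1 cos(4θ) + r1 = cos θ, and positive reals d2, r2 satisfy r2² = d2² − 2 d2 cos θ + 1 and d2 cos(10θ) + r2 = cos θ, with 0 < d1, d2 < 1. Then d1² + d2² − 2 d1 d2 cos(6θ) < (r1 + r2)². -/
open Real Set

/-! Eliminating `r` from the two equations of a disk (it passes through a vertex at angle `θ`
from its centre, and it is tangent to `ℓ`) leaves a convex quadratic equation in the distance `d`
of its centre from `p`, with coefficients in `c = cos θ` and `a = cos φ`, `φ` the angle of the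
centre. At a test point this quadratic is antitone in `c` and monotone in `a`, so enclosing the
cosines by Taylor bounds with `3.141592 < π < 3.141593` and checking signs at the corners of the
enclosing box traps each of its two roots in an interval of width `2·10⁻⁵`. In each of the four
resulting combinations the law-of-cosines distance between the centres stays below `r₁ + r₂`;
the tight case is the one where both disks are the small ones near `ℓ`, with a margin of about
`10⁻⁵` against a square distance of about `6·10⁻³`. -/

theorem cos_mem_Icc_of_mem_Icc {x l u : ℝ} (hl : 0 ≤ l) (hx : x ∈ Icc l u) (hu : u ≤ 1) :
    cos x ∈ Icc (1 - u ^ 2 / 2) (1 - l ^ 2 / 2 + 5 * u ^ 4 / 96) := by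
  obtain ⟨hlx, hxu⟩ := hx
  have hx0 : 0 ≤ x := hl.trans hlx
  have hl2 : l ^ 2 ≤ x ^ 2 := pow_le_pow_left₀ hl hlx 2
  have hu2 : x ^ 2 ≤ u ^ 2 := pow_le_pow_left₀ hx0 hxu 2
  have hu4 : x ^ 4 ≤ u ^ 4 := pow_le_pow_left₀ hx0 hxu 4
  have htaylor := (abs_le.1 (cos_bound (x := x) (by rw [abs_of_nonneg hx0]; linarith))).2
  rw [abs_of_nonneg hx0] at htaylor
  exact ⟨by linarith [one_sub_sq_div_two_le_cos (x := x)], by linarith⟩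

theorem cos_mul_pi_div_339_mem_Icc {k lo hi : ℝ} (hk : 0 ≤ k) (hk₁ : k * 3.141593 / 339 ≤ 1)
    (hlo : lo ≤ 1 - (k * 3.141593 / 339) ^ 2 / 2)
    (hhi : 1 - (k * 3.141592 / 339) ^ 2 / 2 + 5 * (k * 3.141593 / 339) ^ 4 / 96 ≤ hi) :
    cos (k * (π / 339)) ∈ Icc lo hi := by
  have hx : k * (π / 339) ∈ Icc (k * 3.141592 / 339) (k * 3.141593 / 339) := by
    constructor <;> nlinarith [pi_gt_d6, pi_lt_d6]
  exact Icc_subset_Icc hlo hhi (cos_mem_Icc_of_mem_Icc (by positivity) hx hk₁)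

theorem convexOn_quadratic {A B C : ℝ} (hA : 0 ≤ A) :
    ConvexOn ℝ univ fun x => A * x ^ 2 + B * x + C := by
  refine ⟨convex_univ, fun x _ y _ s t hs ht hst => ?_⟩
  obtain rfl : t = 1 - s := by linarith
  have hgap : 0 ≤ A * (s * (1 - s) * (x - y) ^ 2) := by positivity
  simp only [smul_eq_mul]
  nlinarith

theorem ConvexOn.mem_Ioo_or_mem_Ioo_of_eq_zero {f : ℝ → ℝ} (hf : ConvexOn ℝ univ f)
    {d l₁ u₁ l₂ u₂ : ℝ} (hd : f d = 0) (h₁ : 0 < f l₁) (h₂ : f u₁ < 0) (h₃ : f l₂ < 0)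
    (h₄ : 0 < f u₂) (h₁₂ : l₁ ≤ u₁) (h₃₄ : l₂ ≤ u₂) :
    d ∈ Ioo l₁ u₁ ∨ d ∈ Ioo l₂ u₂ := by
  have hmax {x y z : ℝ} (hz : z ∈ Icc x y) : f z ≤ max (f x) (f y) :=
    hf.le_max_of_mem_Icc (mem_univ x) (mem_univ y) hz
  by_contra! h
  rcases le_or_gt d l₁ with hdl | hld
  · exact h₁.not_ge ((hmax ⟨hdl, h₁₂⟩).trans (max_le hd.le h₂.le))
  rcases lt_or_ge d u₁ with hdu | hud
  · exact h.1 ⟨hld, hdu⟩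
  rcases le_or_gt d l₂ with hdl' | hld'
  · exact ((hmax ⟨hud, hdl'⟩).trans_lt (max_lt h₂ h₃)).ne hd
  rcases lt_or_ge d u₂ with hdu' | hud'
  · exact h.2 ⟨hld', hdu'⟩
  · exact h₄.not_ge ((hmax ⟨h₃₄, hud'⟩).trans (max_le h₃.le hd.le))

/-- For a centre at distance `x` from `p`, at angle `φ` from `pq` and at angle `θ` from a vertex,
with `a = cos φ` and `c = cos θ`: the square distance from the centre to the vertex minus the
square distance to the line `ℓ`. -/
def tangentDiskDefect (c a x : ℝ) : ℝ :=
  x ^ 2 - 2 * x * c + 1 - (c - x * a) ^ 2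

theorem tangentDiskDefect_eq_zero {c a d r : ℝ} (hr : r ^ 2 = d ^ 2 - 2 * d * c + 1)
    (ht : d * a + r = c) : tangentDiskDefect c a d = 0 := by
  rw [tangentDiskDefect, ← hr, ← ht]
  ring

theorem convexOn_tangentDiskDefect {c a : ℝ} (ha : |a| ≤ 1) :
    ConvexOn ℝ univ (tangentDiskDefect c a) := by
  have hquad : tangentDiskDefect c a =
      fun x => (1 - a ^ 2) * x ^ 2 + -(2 * c * (1 - a)) * x + (1 - c ^ 2) := by
    funext x
    rw [tangentDiskDefect]
    ring
  rw [hquad]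
  exact convexOn_quadratic (sub_nonneg.2 (sq_le_one_iff_abs_le_one a |>.2 ha))

theorem tangentDiskDefect_le_tangentDiskDefect {c c' a a' x : ℝ} (hx : 0 ≤ x) (hc : c ≤ c')
    (ha : a' ≤ a) (hxa : x * a ≤ c) : tangentDiskDefect c' a' x ≤ tangentDiskDefect c a x := by
  have hgap : c - x * a ≤ c' - x * a' := by nlinarith
  unfold tangentDiskDefect
  nlinarith [mul_le_mul hgap hgap (sub_nonneg.2 hxa) (by linarith)]

theorem dist_mem_Ioo_of_tangentDisk {c a d r c₀ c₁ a₀ a₁ l₁ u₁ l₂ u₂ : ℝ}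
    (hc : c ∈ Icc c₀ c₁) (ha : a ∈ Icc a₀ a₁) (ha₀ : 0 ≤ a₀) (ha₁ : a₁ ≤ 1)
    (hr : r ^ 2 = d ^ 2 - 2 * d * c + 1) (ht : d * a + r = c)
    (hl₁ : 0 ≤ l₁) (h₁₂ : l₁ ≤ u₁) (h₂₃ : u₁ ≤ l₂) (h₃₄ : l₂ ≤ u₂) (hu₂ : u₂ * a₁ ≤ c₀)
    (h₁ : 0 < tangentDiskDefect c₁ a₀ l₁) (h₂ : tangentDiskDefect c₀ a₁ u₁ < 0)
    (h₃ : tangentDiskDefect c₀ a₁ l₂ < 0) (h₄ : 0 < tangentDiskDefect c₁ a₀ u₂) :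
    (d ∈ Ioo l₁ u₁ ∧ c₀ - u₁ * a₁ ≤ r) ∨ (d ∈ Ioo l₂ u₂ ∧ c₀ - u₂ * a₁ ≤ r) := by
  obtain ⟨hc₀, hc₁⟩ := hc
  obtain ⟨ha₀', ha₁'⟩ := ha
  have hbox {x : ℝ} (hx : 0 ≤ x) (hxu : x ≤ u₂) :
      tangentDiskDefect c₁ a₀ x ≤ tangentDiskDefect c a x ∧
        tangentDiskDefect c a x ≤ tangentDiskDefect c₀ a₁ x := by
    have hxa₁ : x * a₁ ≤ c₀ := (mul_le_mul_of_nonneg_right hxu (by linarith)).trans hu₂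
    have hxa : x * a ≤ c := by nlinarith
    exact ⟨tangentDiskDefect_le_tangentDiskDefect hx hc₁ ha₀' hxa,
      tangentDiskDefect_le_tangentDiskDefect hx hc₀ ha₁' hxa₁⟩
  have hconvex := convexOn_tangentDiskDefect (c := c) (a := a) (abs_le.2 ⟨by linarith, by linarith⟩)
  have hradius {u : ℝ} (hdu : d ≤ u) (hu : 0 ≤ u) : c₀ - u * a₁ ≤ r := by
    nlinarith [mul_le_mul hdu ha₁' (by linarith) hu]
  rcases hconvex.mem_Ioo_or_mem_Ioo_of_eq_zero (tangentDiskDefect_eq_zero hr ht)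
    (h₁.trans_le (hbox hl₁ (by linarith)).1) ((hbox (by linarith) (by linarith)).2.trans_lt h₂)
    ((hbox (by linarith) h₃₄).2.trans_lt h₃) (h₄.trans_le (hbox (by linarith) le_rfl).1)
    h₁₂ h₃₄ with hd | hd
  · exact .inl ⟨hd, hradius hd.2.le (by linarith)⟩
  · exact .inr ⟨hd, hradius hd.2.le (by linarith)⟩

theorem cos_pi_div_339_mem_Icc : cos (π / 339) ∈ Icc 0.999957059168 0.999957059581 := by
  simpa using cos_mul_pi_div_339_mem_Icc (k := 1) (lo := 0.999957059168)
    (hi := 0.999957059581) (by norm_num) (by norm_num) (by norm_num) (by norm_num)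

theorem diskQ₁_bounds {d r : ℝ} (hr : r ^ 2 = d ^ 2 - 2 * d * cos (π / 339) + 1)
    (ht : d * cos (4 * (π / 339)) + r = cos (π / 339)) :
    (d ∈ Ioo 0.066985 0.067005 ∧ 0.932998 ≤ r) ∨ (d ∈ Ioo 0.933295 0.933315 ∧ 0.067283 ≤ r) := by
  have ha : cos (4 * (π / 339)) ∈ Icc 0.999312946697 0.999313045477 :=
    cos_mul_pi_div_339_mem_Icc (by norm_num) (by norm_num) (by norm_num) (by norm_num)
  rcases dist_mem_Ioo_of_tangentDisk (l₁ := 0.066985) (u₁ := 0.067005) (l₂ := 0.933295) (u₂ := 0.933315)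
    cos_pi_div_339_mem_Icc ha (by norm_num) (by norm_num) hr ht (by norm_num) (by norm_num)
    (by norm_num) (by norm_num) (by norm_num) (by norm_num [tangentDiskDefect])
    (by norm_num [tangentDiskDefect]) (by norm_num [tangentDiskDefect])
    (by norm_num [tangentDiskDefect]) with ⟨hd, hrad⟩ | ⟨hd, hrad⟩
  · exact .inl ⟨hd, by linarith⟩
  · exact .inr ⟨hd, by linarith⟩

theorem diskQ₂_bounds {d r : ℝ} (hr : r ^ 2 = d ^ 2 - 2 * d * cos (π / 339) + 1)
    (ht : d * cos (10 * (π / 339)) + r = cos (π / 339)) :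
    (d ∈ Ioo 0.01010 0.01012 ∧ 0.98988 ≤ r) ∨ (d ∈ Ioo 0.991988 0.992008 ∧ 0.012205 ≤ r) := by
  have ha : cos (10 * (π / 339)) ∈ Icc 0.995705916856 0.995709761081 :=
    cos_mul_pi_div_339_mem_Icc (by norm_num) (by norm_num) (by norm_num) (by norm_num)
  rcases dist_mem_Ioo_of_tangentDisk (l₁ := 0.01010) (u₁ := 0.01012) (l₂ := 0.991988) (u₂ := 0.992008)
    cos_pi_div_339_mem_Icc ha (by norm_num) (by norm_num) hr ht (by norm_num) (by norm_num)
    (by norm_num) (by norm_num) (by norm_num) (by norm_num [tangentDiskDefect])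
    (by norm_num [tangentDiskDefect]) (by norm_num [tangentDiskDefect])
    (by norm_num [tangentDiskDefect]) with ⟨hd, hrad⟩ | ⟨hd, hrad⟩
  · exact .inl ⟨hd, by linarith⟩
  · exact .inr ⟨hd, by linarith⟩

theorem sq_add_sq_sub_two_mul_mul_lt_sq_add {d₁ d₂ r₁ r₂ k l₁ u₁ l₂ u₂ s₁ s₂ k₀ : ℝ}
    (hd₁ : d₁ ∈ Ioo l₁ u₁) (hd₂ : d₂ ∈ Ioo l₂ u₂) (hl₁ : 0 ≤ l₁) (hl₂ : 0 ≤ l₂)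
    (hr₁ : s₁ ≤ r₁) (hr₂ : s₂ ≤ r₂) (hs : 0 ≤ s₁ + s₂) (hk : k ∈ Icc k₀ 1)
    (h : max (u₁ - l₂) (u₂ - l₁) ^ 2 + 2 * (u₁ * u₂) * (1 - k₀) < (s₁ + s₂) ^ 2) :
    d₁ ^ 2 + d₂ ^ 2 - 2 * d₁ * d₂ * k < (r₁ + r₂) ^ 2 := by
  obtain ⟨hl₁d, hd₁u⟩ := hd₁
  obtain ⟨hl₂d, hd₂u⟩ := hd₂
  have hdiff : (d₁ - d₂) ^ 2 ≤ max (u₁ - l₂) (u₂ - l₁) ^ 2 := by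
    apply sq_le_sq' <;> linarith [le_max_left (u₁ - l₂) (u₂ - l₁), le_max_right (u₁ - l₂) (u₂ - l₁)]
  have hprod : d₁ * d₂ ≤ u₁ * u₂ := mul_le_mul hd₁u.le hd₂u.le (by linarith) (by linarith)
  calc d₁ ^ 2 + d₂ ^ 2 - 2 * d₁ * d₂ * k = (d₁ - d₂) ^ 2 + 2 * (d₁ * d₂) * (1 - k) := by ring
    _ ≤ max (u₁ - l₂) (u₂ - l₁) ^ 2 + 2 * (u₁ * u₂) * (1 - k₀) := by
      have hu : 0 ≤ u₁ * u₂ := mul_nonneg (by linarith) (by linarith)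
      gcongr
      · linarith [hk.2]
      · exact hk.1
    _ < (s₁ + s₂) ^ 2 := h
    _ ≤ (r₁ + r₂) ^ 2 := pow_le_pow_left₀ hs (add_le_add hr₁ hr₂) 2

theorem gadget_340_inequality_general (θ d₁ r₁ d₂ r₂ : ℝ)
    (hθ : θ = π / 339)
    (e₁ : r₁ ^ 2 = d₁ ^ 2 - 2 * d₁ * cos θ + 1)
    (e₂ : d₁ * cos (4 * θ) + r₁ = cos θ)
    (e₃ : r₂ ^ 2 = d₂ ^ 2 - 2 * d₂ * cos θ + 1)
    (e₄ : d₂ * cos (10 * θ) + r₂ = cos θ) :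
    d₁ ^ 2 + d₂ ^ 2 - 2 * d₁ * d₂ * cos (6 * θ) < (r₁ + r₂) ^ 2 := by
  subst hθ
  have hk : cos (6 * (π / 339)) ∈ Icc 0.998454130068 1 :=
    cos_mul_pi_div_339_mem_Icc (by norm_num) (by norm_num) (by norm_num) (by norm_num)
  rcases diskQ₁_bounds e₁ e₂ with ⟨hd₁, hr₁⟩ | ⟨hd₁, hr₁⟩ <;>
  rcases diskQ₂_bounds e₃ e₄ with ⟨hd₂, hr₂⟩ | ⟨hd₂, hr₂⟩ <;>
  exact sq_add_sq_sub_two_mul_mul_lt_sq_add hd₁ hd₂ (by norm_num) (by norm_num) hr₁ hr₂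
    (by norm_num) hk (by norm_num)

/-- Subcase ii of Theorem 3: with `θ = π/339` (`k = 340`), disks `Q₁, Q₂`
(radii `r₁, r₂`, centers at distances `d₁, d₂` from `p` at angles `4θ` and
`10θ` from `pq`, each through two consecutive vertices and tangent to the
line `ℓ` at distance `cos θ` from `p`) satisfy
`d₁² + d₂² − 2d₁d₂cos(6θ) < (r₁ + r₂)²`, i.e. they intersect. -/
theorem gadget_340_inequality (θ d₁ r₁ d₂ r₂ : ℝ)
    (hθ : θ = π / 339)
    (hd₁ : 0 < d₁) (hr₁ : 0 < r₁) (hd₂ : 0 < d₂) (hr₂ : 0 < r₂)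
    (e₁ : r₁ ^ 2 = d₁ ^ 2 - 2 * d₁ * cos θ + 1)
    (e₂ : d₁ * cos (4 * θ) + r₁ = cos θ)
    (e₃ : r₂ ^ 2 = d₂ ^ 2 - 2 * d₂ * cos θ + 1)
    (e₄ : d₂ * cos (10 * θ) + r₂ = cos θ)
    (hd₁' : d₁ < 1) (hd₂' : d₂ < 1) :
    d₁ ^ 2 + d₂ ^ 2 - 2 * d₁ * d₂ * cos (6 * θ) < (r₁ + r₂) ^ 2 :=
  gadget_340_inequality_general θ d₁ r₁ d₂ r₂ hθ e₁ e₂ e₃ e₄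
end
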